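/- arXiv:1109.0351 — 3 statements merged into one kernel-verified Lean document; each statement's English description precedes it below -/
import Mathlib

section
/- Let (X_0^T, Y_0^T) be a pair of jointly distributed continuous-time stochastic processes. Then the map t ↦ I(X_0^t → Y_0^t) is monotone nondecreasing on [0,T]. -/
open MeasureTheory ProbabilityTheory Real Set
open scoped ENNReal NNReal

noncomputable section


namespace CTDI

variable {Ω : Type*} [MeasurableSpace Ω]

/-- Relative entropy (Kullback--Leibler divergence) `D(P ‖ Q)`. -/
def relEnt {α : Type*} [MeasurableSpace α] (P Q : Measure α) : ℝ≥0∞ :=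
  open Classical in
  if P ≪ Q ∧ Integrable (fun x => Real.log (P.rnDeriv Q x).toReal) P then
    ENNReal.ofReal (∫ x, Real.log (P.rnDeriv Q x).toReal ∂P)
  else ⊤

/-- Mutual information `I(U;V) = D(P_{U,V} ‖ P_U × P_V)`. -/
def mutInfo {α β : Type*} [MeasurableSpace α] [MeasurableSpace β]
    (μ : Measure Ω) (U : Ω → α) (V : Ω → β) : ℝ≥0∞ :=
  relEnt (μ.map fun ω => (U ω, V ω)) ((μ.map U).prod (μ.map V))

/-- Conditional mutual information `I(U;V|W)` à la Wyner: the supremum over all finite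
quantizations `f`, `g` of `U` and `V` of `I([U]; [V], W) - I([U]; W)`. -/
def condMI {α β γ : Type*} [MeasurableSpace α] [MeasurableSpace β] [MeasurableSpace γ]
    (μ : Measure Ω) (U : Ω → α) (V : Ω → β) (W : Ω → γ) : ℝ≥0∞ :=
  ⨆ (k : ℕ) (l : ℕ) (f : α → Fin k) (g : β → Fin l)
      (_ : Measurable f) (_ : Measurable g),
    mutInfo μ (fun ω => f (U ω)) (fun ω => (g (V ω), W ω)) -
      mutInfo μ (fun ω => f (U ω)) W

/-- The restriction `Z_a^b = {Z_s : a ≤ s < b}` of a continuous-time process,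
viewed as a random object valued in the function space `Ico a b → E`. -/
def seg {E : Type*} (Z : ℝ → Ω → E) (a b : ℝ) : Ω → (Ico a b → E) :=
  fun ω s => Z s.1 ω

/-- A finite partition `a = t_0 < t_1 < ⋯ < t_n = b` of the interval `[a,b)`. -/
structure Partn (a b : ℝ) where
  n : ℕ
  t : ℕ → ℝ
  mono : ∀ i < n, t i < t (i + 1)
  first : t 0 = a
  last : t n = b

/-- `I_t(X_a^b → Y_a^b) = Σ_{i=1}^n I(Y_{t_{i-1}}^{t_i}; X_a^{t_i} | Y_a^{t_{i-1}})`. -/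
def dInfoP {E F : Type*} [MeasurableSpace E] [MeasurableSpace F] (μ : Measure Ω)
    (X : ℝ → Ω → E) (Y : ℝ → Ω → F) {a b : ℝ} (P : Partn a b) : ℝ≥0∞ :=
  ∑ i ∈ Finset.range P.n,
    condMI μ (seg Y (P.t i) (P.t (i + 1))) (seg X a (P.t (i + 1))) (seg Y a (P.t i))

/-- Directed information in continuous time:
`I(X_a^b → Y_a^b) = inf_t I_t(X_a^b → Y_a^b)` over all finite partitions of `[a,b)`. -/
def dInfo {E F : Type*} [MeasurableSpace E] [MeasurableSpace F] (μ : Measure Ω)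
    (X : ℝ → Ω → E) (Y : ℝ → Ω → F) (a b : ℝ) : ℝ≥0∞ :=
  ⨅ P : Partn a b, dInfoP μ X Y P

/-
Truncating a partition `0 = t_0 < ⋯ < t_n = t` of `[0,t)` at `s ≤ t` gives the partition
`t_0 < ⋯ < t_j < s` of `[0,s)`, where `t_j < s ≤ t_{j+1}`. Its first `j` summands are those of
`I_t`, the remaining summands of `I_t` are dropped, and the last one only sees the restrictions
of `Y_{t_j}^{t_{j+1}}` and `X_0^{t_{j+1}}` to `[t_j, s)` and `[0, s)`. A quantization of a
restriction is a quantization of the unrestricted segment, so that summand can only decrease.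
Taking infima over partitions gives `I(X_0^s → Y_0^s) ≤ I(X_0^t → Y_0^t)`.
-/

lemma condMI_comp_le {α α' β β' γ : Type*} [MeasurableSpace α] [MeasurableSpace α']
    [MeasurableSpace β] [MeasurableSpace β'] [MeasurableSpace γ]
    (μ : Measure Ω) (U : Ω → α) (V : Ω → β) (W : Ω → γ)
    {φ : α → α'} (hφ : Measurable φ) {ψ : β → β'} (hψ : Measurable ψ) :
    condMI μ (fun ω => φ (U ω)) (fun ω => ψ (V ω)) W ≤ condMI μ U V W :=
  iSup_le fun k => iSup_le fun l => iSup_le fun f => iSup_le fun g =>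
    iSup_le fun hf => iSup_le fun hg =>
      le_iSup_of_le k <| le_iSup_of_le l <| le_iSup_of_le (f ∘ φ) <|
        le_iSup_of_le (g ∘ ψ) <| le_iSup_of_le (hf.comp hφ) <| le_iSup_of_le (hg.comp hψ) le_rfl

lemma condMI_seg_le_of_le {E F γ : Type*} [MeasurableSpace E] [MeasurableSpace F]
    [MeasurableSpace γ] (μ : Measure Ω) (X : ℝ → Ω → E) (Y : ℝ → Ω → F) (W : Ω → γ)
    (a b : ℝ) {s c : ℝ} (hsc : s ≤ c) :
    condMI μ (seg Y b s) (seg X a s) W ≤ condMI μ (seg Y b c) (seg X a c) W :=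
  condMI_comp_le μ (seg Y b c) (seg X a c) W
    (φ := @Set.domRestrict₂ ℝ (fun _ => F) _ _ (Ico_subset_Ico_right hsc))
    (ψ := @Set.domRestrict₂ ℝ (fun _ => E) _ _ (Ico_subset_Ico_right hsc))
    (Set.measurable_restrict₂ _) (Set.measurable_restrict₂ _)

namespace Partn

variable {a c s : ℝ}

lemma exists_cut_index (P : Partn a c) (has : a < s) (hsc : s ≤ c) :
    ∃ j < P.n, P.t j < s ∧ s ≤ P.t (j + 1) := by
  classical
  have hn : s ≤ P.t P.n := by rwa [P.last]
  have hex : ∃ i, s ≤ P.t i := ⟨P.n, hn⟩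
  have hpos : Nat.find hex ≠ 0 := fun h0 => by
    have h := Nat.find_spec hex
    rw [h0, P.first] at h
    linarith
  refine ⟨Nat.find hex - 1, ?_, not_le.1 (Nat.find_min hex (by omega)), ?_⟩
  · have := Nat.find_min' hex hn
    omega
  · rw [Nat.sub_add_cancel (Nat.pos_of_ne_zero hpos)]
    exact Nat.find_spec hex

def cut (P : Partn a c) {j : ℕ} (hjn : j ≤ P.n) (hjs : P.t j < s) : Partn a s where
  n := j + 1
  t i := if i ≤ j then P.t i else s
  mono i hi := by
    rcases (Nat.lt_succ_iff.1 hi).lt_or_eq with hij | rfl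
    · simpa [hij.le, Nat.succ_le_of_lt hij] using P.mono i (by omega)
    · simpa using hjs
  first := by simp [P.first]
  last := by simp

lemma cut_t_of_le (P : Partn a c) {j : ℕ} (hjn : j ≤ P.n) (hjs : P.t j < s) {i : ℕ}
    (hij : i ≤ j) : (P.cut hjn hjs).t i = P.t i :=
  if_pos hij

lemma cut_t_succ (P : Partn a c) {j : ℕ} (hjn : j ≤ P.n) (hjs : P.t j < s) :
    (P.cut hjn hjs).t (j + 1) = s :=
  if_neg (by omega)

end Partn

lemma dInfoP_cut_le {E F : Type*} [MeasurableSpace E] [MeasurableSpace F] (μ : Measure Ω)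
    (X : ℝ → Ω → E) (Y : ℝ → Ω → F) {a c s : ℝ} (P : Partn a c) {j : ℕ} (hjn : j < P.n)
    (hjs : P.t j < s) (hsj : s ≤ P.t (j + 1)) :
    dInfoP μ X Y (P.cut hjn.le hjs) ≤ dInfoP μ X Y P := by
  unfold dInfoP
  calc _ ≤ ∑ i ∈ Finset.range (j + 1),
        condMI μ (seg Y (P.t i) (P.t (i + 1))) (seg X a (P.t (i + 1))) (seg Y a (P.t i)) := by
        refine Finset.sum_le_sum fun i hi => ?_
        have hij : i ≤ j := Nat.lt_succ_iff.1 (Finset.mem_range.1 hi)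
        rw [Partn.cut_t_of_le P _ _ hij]
        rcases hij.lt_or_eq with hij | rfl
        · rw [Partn.cut_t_of_le P _ _ hij]
        · rw [Partn.cut_t_succ]
          exact condMI_seg_le_of_le μ X Y _ a (P.t i) hsj
    _ ≤ _ := Finset.sum_le_sum_of_subset (Finset.range_subset_range.2 hjn)

lemma dInfo_self {E F : Type*} [MeasurableSpace E] [MeasurableSpace F] (μ : Measure Ω)
    (X : ℝ → Ω → E) (Y : ℝ → Ω → F) (a : ℝ) : dInfo μ X Y a a = 0 :=
  le_antisymm (iInf_le_of_le ⟨0, fun _ => a, by simp, rfl, rfl⟩ (by simp [dInfoP])) zero_le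

lemma dInfo_mono_right {E F : Type*} [MeasurableSpace E] [MeasurableSpace F] (μ : Measure Ω)
    (X : ℝ → Ω → E) (Y : ℝ → Ω → F) {a s t : ℝ} (has : a ≤ s) (hst : s ≤ t) :
    dInfo μ X Y a s ≤ dInfo μ X Y a t := by
  rcases has.eq_or_lt with rfl | has
  · simp [dInfo_self]
  refine le_iInf fun P => ?_
  obtain ⟨j, hjn, hjs, hsj⟩ := P.exists_cut_index has hst
  exact (iInf_le _ (P.cut hjn.le hjs)).trans (dInfoP_cut_le μ X Y P hjn hjs hsj)

theorem dInfo_monotone_general {E F : Type*} [MeasurableSpace E] [MeasurableSpace F]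
    (μ : Measure Ω) (T : ℝ)
    (X : ℝ → Ω → E) (Y : ℝ → Ω → F) :
    MonotoneOn (fun t : ℝ => dInfo μ X Y 0 t) (Icc 0 T) :=
  fun _ hs _ _ hst => dInfo_mono_right μ X Y hs.1 hst

/-- The map `t ↦ I(X_0^t → Y_0^t)` is monotone nondecreasing on `[0,T]`. -/
theorem dInfo_monotone {E F : Type*} [MeasurableSpace E] [MeasurableSpace F]
    (μ : Measure Ω) [IsProbabilityMeasure μ] (T : ℝ) (hT : 0 < T)
    (X : ℝ → Ω → E) (Y : ℝ → Ω → F) :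
    MonotoneOn (fun t : ℝ => dInfo μ X Y 0 t) (Icc 0 T) :=
  dInfo_monotone_general μ T X Y

end CTDI
end
end

section
/- Let X be a positive finite-valued random variable with pmf p_X, and define g(t) = (Σ_x x e^{−tx} p_X(x)) / (Σ_x e^{−tx} p_X(x)) for t ≥ 0. Let τ be a nonnegative random variable with density f_τ(t) = (Σ_x e^{−tx} p_X(x)) / E[1/X] for t ≥ 0, and let Y have density f_Y(y) = Σ_x p_X(x) x e^{−xy} for y ≥ 0 (the mixture of exponentials with rates X). Then E[g(τ) log g(τ)] = (1 − h(Y)) / E[1/X], where h(Y) = −∫_0^∞ f_Y(y) log f_Y(y) dy is the differential entropy of Y. -/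
/-!
Write `L(t) = Σ_x p(x) e^{-tx}` for the Laplace transform of `X`. Then `f_Y = -L'` and
`g = f_Y / L`, so `f_τ · g log g = f_Y (log f_Y - log L) / E[1/X]`. The cross term is an exact
derivative: `(L - L log L)' = f_Y log L`, and since `L(0) = 1` and `L(∞) = 0` it integrates to `-1`.
All integrals converge because `f_Y` decays exponentially while `log f_Y` and `log L` grow at most
linearly.
-/

open MeasureTheory Real Set Filter Topology

noncomputable def expSum (S : Finset ℝ) (c : ℝ → ℝ) (t : ℝ) : ℝ :=
  ∑ x ∈ S, c x * exp (-x * t)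

namespace expSum

variable {S : Finset ℝ} {c : ℝ → ℝ}

theorem apply_zero : expSum S c 0 = ∑ x ∈ S, c x := by
  simp [expSum]

@[fun_prop]
theorem continuous : Continuous (expSum S c) :=
  continuous_finsetSum _ fun _ _ => by fun_prop

theorem hasDerivAt (t : ℝ) : HasDerivAt (expSum S c) (-expSum S (fun x => c x * x) t) t := by
  unfold expSum
  refine (HasDerivAt.fun_sum (u := S) fun x _ =>
    (((hasDerivAt_id' t).const_mul (-x)).exp).const_mul (c x)).congr_deriv ?_
  rw [← Finset.sum_neg_distrib]
  exact Finset.sum_congr rfl fun x _ => by ring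

theorem tendsto_atTop (hS : ∀ x ∈ S, 0 < x) : Tendsto (expSum S c) atTop (𝓝 0) := by
  have h := tendsto_finsetSum S fun x hx => (tendsto_exp_atBot.comp
    (tendsto_id.const_mul_atTop_of_neg (neg_neg_iff_pos.2 (hS x hx)))).const_mul (c x)
  unfold expSum
  simpa using h

theorem nonneg (hc : ∀ x ∈ S, 0 ≤ c x) (t : ℝ) : 0 ≤ expSum S c t :=
  Finset.sum_nonneg fun x hx => mul_nonneg (hc x hx) (exp_pos _).le

theorem pos (hc : ∀ x ∈ S, 0 ≤ c x) (hc₀ : ∃ x ∈ S, 0 < c x) (t : ℝ) : 0 < expSum S c t :=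
  Finset.sum_pos' (fun x hx => mul_nonneg (hc x hx) (exp_pos _).le)
    (hc₀.imp fun _ ⟨hx, hcx⟩ => ⟨hx, mul_pos hcx (exp_pos _)⟩)

theorem mul_exp_le (hc : ∀ x ∈ S, 0 ≤ c x) {x₀ : ℝ} (hx₀ : x₀ ∈ S) (t : ℝ) :
    c x₀ * exp (-x₀ * t) ≤ expSum S c t :=
  Finset.single_le_sum (f := fun x => c x * exp (-x * t))
    (fun x hx => mul_nonneg (hc x hx) (exp_pos _).le) hx₀

theorem le_sum_mul_exp {m : ℝ} (hm : ∀ x ∈ S, m ≤ x) (hc : ∀ x ∈ S, 0 ≤ c x) {t : ℝ}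
    (ht : 0 ≤ t) : expSum S c t ≤ (∑ x ∈ S, c x) * exp (-m * t) := by
  rw [Finset.sum_mul]
  refine Finset.sum_le_sum fun x hx => mul_le_mul_of_nonneg_left ?_ (hc x hx)
  exact exp_le_exp.2 (by nlinarith [hm x hx])

theorem abs_log_le (hS : ∀ x ∈ S, 0 ≤ x) (hc : ∀ x ∈ S, 0 ≤ c x) {x₀ : ℝ} (hx₀ : x₀ ∈ S)
    (hcx₀ : 0 < c x₀) {t : ℝ} (ht : 0 ≤ t) :
    |log (expSum S c t)| ≤ |log (∑ x ∈ S, c x)| + |log (c x₀)| + x₀ * t := by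
  have hlow : log (c x₀) - x₀ * t ≤ log (expSum S c t) := by
    calc log (c x₀) - x₀ * t = log (c x₀ * exp (-x₀ * t)) := by
          rw [log_mul hcx₀.ne' (exp_pos _).ne', log_exp]; ring
      _ ≤ log (expSum S c t) := log_le_log (by positivity) (mul_exp_le hc hx₀ t)
  have hupp : log (expSum S c t) ≤ log (∑ x ∈ S, c x) := by
    refine log_le_log (pos hc ⟨x₀, hx₀, hcx₀⟩ t) ?_
    simpa using le_sum_mul_exp (m := 0) hS hc ht
  rw [abs_le]
  constructor <;> nlinarith [le_abs_self (log (∑ x ∈ S, c x)), neg_abs_le (log (c x₀)),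
    abs_nonneg (log (∑ x ∈ S, c x)), abs_nonneg (log (c x₀)), hS x₀ hx₀]

end expSum

theorem integrableOn_Ioi_exp_neg_mul_mul_affine {m : ℝ} (hm : 0 < m) (A B : ℝ) :
    IntegrableOn (fun t => exp (-m * t) * (A + B * t)) (Ioi 0) := by
  have h₁ := (exp_neg_integrableOn_Ioi 0 hm).const_mul A
  have h₂ := (integrableOn_rpow_mul_exp_neg_mul_rpow (s := 1) (p := 1) (by norm_num) one_pos hm
    ).const_mul B
  simp only [rpow_one] at h₂
  refine IntegrableOn.congr_fun (h₁.fun_add h₂) (fun t _ => ?_) measurableSet_Ioi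
  ring

theorem integrableOn_expSum_mul_log_expSum {S : Finset ℝ} {c d : ℝ → ℝ} (hS : ∀ x ∈ S, 0 < x)
    (hc : ∀ x ∈ S, 0 ≤ c x) (hd : ∀ x ∈ S, 0 ≤ d x) (hd₀ : ∃ x ∈ S, 0 < d x) :
    IntegrableOn (fun t => expSum S c t * log (expSum S d t)) (Ioi 0) := by
  obtain ⟨x₀, hx₀, hdx₀⟩ := hd₀
  have hne : S.Nonempty := ⟨x₀, hx₀⟩
  set m := S.min' hne
  have hm : 0 < m := hS _ (S.min'_mem hne)
  have hbound : ∀ t ∈ Ioi (0 : ℝ), ‖expSum S c t * log (expSum S d t)‖ ≤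
      (∑ x ∈ S, c x) * (exp (-m * t) * (|log (∑ x ∈ S, d x)| + |log (d x₀)| + x₀ * t)) := by
    intro t ht
    rw [norm_mul, norm_of_nonneg (expSum.nonneg hc t), ← mul_assoc]
    exact mul_le_mul (expSum.le_sum_mul_exp (fun x hx => S.min'_le x hx) hc ht.le)
      (expSum.abs_log_le (fun x hx => (hS x hx).le) hd hx₀ hdx₀ ht.le) (abs_nonneg _)
      (mul_nonneg (Finset.sum_nonneg hc) (exp_pos _).le)
  have hmeas : Measurable fun t => expSum S c t * log (expSum S d t) :=
    expSum.continuous.measurable.mul (measurable_log.comp expSum.continuous.measurable)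
  exact ((integrableOn_Ioi_exp_neg_mul_mul_affine hm _ _).const_mul _).mono'
    hmeas.aestronglyMeasurable (ae_restrict_of_forall_mem measurableSet_Ioi hbound)

/-- If `F' = -f`, then `F - F log F` is an antiderivative of `f log F`. -/
theorem integral_Ioi_mul_log_of_hasDerivAt_neg {F f : ℝ → ℝ} {a : ℝ}
    (hF : ∀ t ∈ Ici a, HasDerivAt F (-f t) t) (hF₀ : ∀ t ∈ Ioi a, F t ≠ 0)
    (hint : IntegrableOn (fun t => f t * log (F t)) (Ioi a)) (hlim : Tendsto F atTop (𝓝 0)) :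
    ∫ t in Ioi a, f t * log (F t) = F a * log (F a) - F a := by
  have hcont : ContinuousWithinAt (fun t => F t - F t * log (F t)) (Ici a) a :=
    ((hF a self_mem_Ici).continuousAt.sub
      (continuous_mul_log.continuousAt.comp (hF a self_mem_Ici).continuousAt)).continuousWithinAt
  have hderiv : ∀ t ∈ Ioi a, HasDerivAt (fun t => F t - F t * log (F t)) (f t * log (F t)) t :=
    fun t ht => ((hF t (Ioi_subset_Ici_self ht)).sub ((hasDerivAt_mul_log (hF₀ t ht)).comp t
      (hF t (Ioi_subset_Ici_self ht)))).congr_deriv (by ring)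
  have hlim' : Tendsto (fun t => F t - F t * log (F t)) atTop (𝓝 0) := by
    simpa using hlim.sub ((continuous_mul_log.tendsto 0).comp hlim)
  rw [integral_Ioi_of_hasDerivAt_of_tendsto hcont hderiv hint hlim']
  ring

theorem div_mul_div_mul_log_div {a b E : ℝ} (ha : a ≠ 0) (hb : b ≠ 0) :
    b / E * (a / b * log (a / b)) = (a * log a - a * log b) / E := by
  rw [log_div ha hb]
  field_simp

/-- Let `X` be a positive finite-valued random variable with pmf `p`
supported on the finite set `S`, let
`g(t) = (Σ_x x e^{-tx} p(x)) / (Σ_x e^{-tx} p(x))`, let `τ` have density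
`f_τ(t) = (Σ_x e^{-tx} p(x)) / E[1/X]` on `t ≥ 0`, and let `Y` have density
`f_Y(y) = Σ_x p(x) x e^{-xy}` on `y ≥ 0`.  Then
`E[g(τ) log g(τ)] = (1 - h(Y)) / E[1/X]`, where `h(Y) = -∫_0^∞ f_Y log f_Y`. -/
theorem expectation_g_log_g (S : Finset ℝ) (p : ℝ → ℝ)
    (hSpos : ∀ x ∈ S, 0 < x) (hpnn : ∀ x ∈ S, 0 ≤ p x) (hpsum : ∑ x ∈ S, p x = 1)
    (g fτ fY : ℝ → ℝ)
    (hg : ∀ t : ℝ, g t =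
      (∑ x ∈ S, x * Real.exp (-t * x) * p x) / (∑ x ∈ S, Real.exp (-t * x) * p x))
    (hfτ : ∀ t : ℝ, fτ t =
      (∑ x ∈ S, Real.exp (-t * x) * p x) / (∑ x ∈ S, p x / x))
    (hfY : ∀ y : ℝ, fY y = ∑ x ∈ S, p x * x * Real.exp (-x * y)) :
    ∫ t in Ioi (0 : ℝ), fτ t * (g t * Real.log (g t))
      = (1 - (-∫ y in Ioi (0 : ℝ), fY y * Real.log (fY y)))
        / (∑ x ∈ S, p x / x) := by
  have hfY' : fY = expSum S (fun x => p x * x) := funext hfY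
  subst hfY'
  have hp₀ : ∃ x ∈ S, 0 < p x := Finset.exists_lt_of_sum_lt (by simp [hpsum])
  have hpx : ∀ x ∈ S, 0 ≤ p x * x := fun x hx => mul_nonneg (hpnn x hx) (hSpos x hx).le
  have hpx₀ : ∃ x ∈ S, 0 < p x * x := hp₀.imp fun x ⟨hx, h⟩ => ⟨hx, mul_pos h (hSpos x hx)⟩
  have hL : ∀ t, ∑ x ∈ S, exp (-t * x) * p x = expSum S p t :=
    fun t => Finset.sum_congr rfl fun x _ => by rw [neg_mul, neg_mul, mul_comm t]; ring
  have hN : ∀ t, ∑ x ∈ S, x * exp (-t * x) * p x = expSum S (fun x => p x * x) t :=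
    fun t => Finset.sum_congr rfl fun x _ => by rw [neg_mul, neg_mul, mul_comm t]; ring
  have hpoint : ∀ t, fτ t * (g t * log (g t)) = (expSum S (fun x => p x * x) t *
      log (expSum S (fun x => p x * x) t) - expSum S (fun x => p x * x) t *
      log (expSum S p t)) / ∑ x ∈ S, p x / x := by
    intro t
    rw [hfτ, hg, hL, hN]
    exact div_mul_div_mul_log_div (expSum.pos hpx hpx₀ t).ne' (expSum.pos hpnn hp₀ t).ne'
  have hcross : ∫ t in Ioi 0, expSum S (fun x => p x * x) t * log (expSum S p t) = -1 := by
    rw [integral_Ioi_mul_log_of_hasDerivAt_neg (fun t _ => expSum.hasDerivAt t)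
      (fun t _ => (expSum.pos hpnn hp₀ t).ne')
      (integrableOn_expSum_mul_log_expSum hSpos hpx hpnn hp₀)
      (expSum.tendsto_atTop hSpos), expSum.apply_zero, hpsum]
    simp
  simp_rw [hpoint]
  rw [integral_div, integral_sub (integrableOn_expSum_mul_log_expSum hSpos hpx hpx hpx₀)
    (integrableOn_expSum_mul_log_expSum hSpos hpx hpnn hp₀), hcross]
  ring
end

section
/- Fix ε > 0 and T > 0, and let (X_0^T, Y_0^T) be jointly distributed processes such that the channel input is a delayed version of the output: X_t = Y_{t−ε} for t ∈ [ε, T) and X_t = 0 for t ∈ [0, ε) (more generally, such that for every t, X_0^t is measurable with respect to σ(Y_0^{max(t−ε,0)})). Then I_t(X_0^T → Y_0^T) = 0 for every finite partition t of [0,T) with mesh max_i (t_i − t_{i−1}) ≤ ε, and consequently the directed information satisfies I(X_0^T → Y_0^T) = 0. -/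
open MeasureTheory ProbabilityTheory Real Set
open scoped ENNReal NNReal

noncomputable section


namespace CTDI

variable {Ω : Type*} [MeasurableSpace Ω]

/-!
If `X_0^{t_i}` is a function of `Y_0^{t_{i-1}}`, then the `i`-th term
`I(Y_{t_{i-1}}^{t_i}; X_0^{t_i} | Y_0^{t_{i-1}})` vanishes: every quantization `[X_0^{t_i}]` is
a measurable function `h` of the condition `W = Y_0^{t_{i-1}}` (Doob–Dynkin), and
`I([U]; (h(W), W)) = I([U]; W)` because `w ↦ (h w, w)` is a measurable embedding, under which
relative entropy is invariant. With delay `ε`, this is the case for every partition of mesh at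
most `ε`, and such partitions exist, so the infimum defining `I(X_0^T → Y_0^T)` is `0`.
-/

lemma relEnt_zero_left {α : Type*} [MeasurableSpace α] (Q : Measure α) :
    relEnt (0 : Measure α) Q = 0 := by
  rw [relEnt, if_pos ⟨Measure.AbsolutelyContinuous.zero Q, integrable_zero_measure⟩]
  simp

lemma _root_.MeasurableEmbedding.absolutelyContinuous_map_iff {α β : Type*}
    [MeasurableSpace α] [MeasurableSpace β] {e : α → β} (he : MeasurableEmbedding e)
    {P Q : Measure α} : P.map e ≪ Q.map e ↔ P ≪ Q := by
  refine ⟨fun hPQ => Measure.AbsolutelyContinuous.mk fun s _ hQs => ?_,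
    he.absolutelyContinuous_map⟩
  have hs := @hPQ (e '' s)
  rw [he.map_apply, he.map_apply, he.injective.preimage_image] at hs
  exact hs hQs

lemma relEnt_map {α β : Type*} [MeasurableSpace α] [MeasurableSpace β]
    (P Q : Measure α) [SigmaFinite P] [SigmaFinite Q] {e : α → β}
    (he : MeasurableEmbedding e) :
    relEnt (P.map e) (Q.map e) = relEnt P Q := by
  by_cases hPQ : P ≪ Q
  · have hllr : (fun x => Real.log ((P.map e).rnDeriv (Q.map e) (e x)).toReal)
        =ᵐ[P] fun x => Real.log (P.rnDeriv Q x).toReal := by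
      filter_upwards [hPQ.ae_le (he.rnDeriv_map P Q)] with x hx
      rw [hx]
    have hint : Integrable (fun x => Real.log ((P.map e).rnDeriv (Q.map e) x).toReal) (P.map e)
        ↔ Integrable (fun x => Real.log (P.rnDeriv Q x).toReal) P := by
      rw [he.integrable_map_iff]
      exact integrable_congr hllr
    by_cases hI : Integrable (fun x => Real.log (P.rnDeriv Q x).toReal) P
    · rw [relEnt, relEnt, if_pos ⟨he.absolutelyContinuous_map hPQ, hint.mpr hI⟩,
        if_pos ⟨hPQ, hI⟩, he.integral_map, integral_congr_ae hllr]
    · rw [relEnt, relEnt, if_neg fun h => hI (hint.mp h.2), if_neg fun h => hI h.2]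
  · rw [relEnt, relEnt, if_neg fun h => hPQ (he.absolutelyContinuous_map_iff.mp h.1),
      if_neg fun h => hPQ h.1]

lemma mutInfo_comp_right {α β γ : Type*} [MeasurableSpace α] [MeasurableSpace β]
    [MeasurableSpace γ] (μ : Measure Ω) [IsFiniteMeasure μ] (A : Ω → α) (B : Ω → β)
    {e : β → γ} (he : MeasurableEmbedding e) :
    mutInfo μ A (fun ω => e (B ω)) = mutInfo μ A B := by
  have hide : MeasurableEmbedding (Prod.map (id : α → α) e) := MeasurableEmbedding.id.prodMap he
  by_cases hAB : AEMeasurable (fun ω => (A ω, B ω)) μ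
  · have hA : AEMeasurable A μ := measurable_fst.comp_aemeasurable hAB
    have hB : AEMeasurable B μ := measurable_snd.comp_aemeasurable hAB
    have hjoint : μ.map (fun ω => (A ω, e (B ω))) =
        (μ.map fun ω => (A ω, B ω)).map (Prod.map id e) :=
      (AEMeasurable.map_map_of_aemeasurable hide.measurable.aemeasurable hAB).symm
    have hmarg : μ.map (fun ω => e (B ω)) = (μ.map B).map e :=
      (AEMeasurable.map_map_of_aemeasurable he.measurable.aemeasurable hB).symm
    have hprod : (μ.map A).prod ((μ.map B).map e) =
        ((μ.map A).prod (μ.map B)).map (Prod.map id e) := by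
      rw [← Measure.map_prod_map _ _ measurable_id he.measurable, Measure.map_id]
    rw [mutInfo, mutInfo, hjoint, hmarg, hprod, relEnt_map _ _ hide]
  · have hAeB : ¬ AEMeasurable (fun ω => (A ω, e (B ω))) μ := fun h =>
      hAB (hide.aemeasurable_comp_iff.mp h)
    rw [mutInfo, mutInfo, Measure.map_of_not_aemeasurable hAB,
      Measure.map_of_not_aemeasurable hAeB, relEnt_zero_left, relEnt_zero_left]

lemma measurableEmbedding_graph {β κ : Type*} [MeasurableSpace β] [MeasurableSpace κ]
    [MeasurableEq κ] {h : β → κ} (hh : Measurable h) :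
    MeasurableEmbedding fun w => (h w, w) := by
  refine MeasurableEmbedding.of_measurable_inverse (hh.prodMk measurable_id) ?_
    measurable_snd fun _ => rfl
  have hrange : range (fun w => (h w, w)) = {p : κ × β | h p.2 = p.1} := by
    ext ⟨k, w⟩
    simp [eq_comm]
  rw [hrange]
  exact measurableSet_eq_fun (hh.comp measurable_snd) measurable_fst

lemma condMI_eq_zero_of_comap_le {α β γ : Type*} [MeasurableSpace α] [MeasurableSpace β]
    [MeasurableSpace γ] (μ : Measure Ω) [IsProbabilityMeasure μ]
    (U : Ω → α) (V : Ω → β) (W : Ω → γ)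
    (hVW : MeasurableSpace.comap V inferInstance ≤ MeasurableSpace.comap W inferInstance) :
    condMI μ U V W = 0 := by
  refine le_antisymm (iSup_le fun k => iSup_le fun l => iSup_le fun f => iSup_le fun g =>
    iSup_le fun _ => iSup_le fun hg => ?_) zero_le
  have : Nonempty Ω := nonempty_of_isProbabilityMeasure μ
  have : Nonempty (Fin l) := ⟨g (V (Classical.arbitrary Ω))⟩
  have hgV : Measurable[MeasurableSpace.comap W inferInstance] (fun ω => g (V ω)) :=
    (hg.comp (comap_measurable V)).mono hVW le_rfl
  obtain ⟨h, hh, hgVW⟩ := hgV.exists_eq_measurable_comp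
  have hcond : (fun ω => (g (V ω), W ω)) = fun ω => (h (W ω), W ω) := by
    funext ω
    rw [show g (V ω) = h (W ω) from congrFun hgVW ω]
  rw [hcond, mutInfo_comp_right μ _ W (measurableEmbedding_graph hh), tsub_self]

lemma comap_seg_mono {Ω E : Type*} [MeasurableSpace E] (Z : ℝ → Ω → E) (c : ℝ) {a b : ℝ}
    (hab : a ≤ b) :
    MeasurableSpace.comap (seg Z c a) inferInstance ≤
      MeasurableSpace.comap (seg Z c b) inferInstance :=
  MeasurableSpace.comap_le_comap_of_eq_comp
    (fun z s => z ⟨s.1, s.2.1, s.2.2.trans_le hab⟩)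
    (measurable_pi_lambda _ fun _ => measurable_pi_apply _) rfl

namespace Partn

variable {a b : ℝ} (P : Partn a b)

lemma t_le_t {i j : ℕ} (hij : i ≤ j) (hj : j ≤ P.n) : P.t i ≤ P.t j := by
  induction j, hij using Nat.le_induction with
  | base => rfl
  | succ j _ ih => exact (ih (by omega)).trans (P.mono j (by omega)).le

lemma t_mem_Icc {i : ℕ} (hi : i ≤ P.n) : P.t i ∈ Icc a b :=
  ⟨P.first.symm.trans_le (P.t_le_t (Nat.zero_le i) hi), (P.t_le_t hi le_rfl).trans_eq P.last⟩

def uniform (a b ε : ℝ) (hab : a < b) (hε : 0 < ε) : Partn a b where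
  n := ⌈(b - a) / ε⌉₊
  t i := min (a + i * ε) b
  mono i hi := by
    have hlt : a + i * ε < b := by
      have := (lt_div_iff₀ hε).mp ((Nat.lt_ceil).mp hi)
      linarith
    rw [min_eq_left hlt.le]
    push_cast
    exact lt_min (by linarith) hlt
  first := by simp [hab.le]
  last := by
    refine min_eq_right ?_
    have := (div_le_iff₀ hε).mp (Nat.le_ceil ((b - a) / ε))
    linarith

lemma uniform_mesh_le (a b ε : ℝ) (hab : a < b) (hε : 0 < ε) (i : ℕ) :
    (uniform a b ε hab hε).t (i + 1) - (uniform a b ε hab hε).t i ≤ ε := by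
  simp only [uniform]
  push_cast
  rcases le_total (a + i * ε) b with h | h
  · rw [min_eq_left h]
    linarith [min_le_left (a + (i + 1) * ε) b]
  · rw [min_eq_right h, min_eq_right (by linarith)]
    linarith

end Partn

lemma dInfoP_eq_zero_of_comap_le {E F : Type*} [MeasurableSpace E] [MeasurableSpace F]
    (μ : Measure Ω) [IsProbabilityMeasure μ] (X : ℝ → Ω → E) (Y : ℝ → Ω → F) {a b : ℝ}
    (P : Partn a b)
    (hcausal : ∀ i < P.n, MeasurableSpace.comap (seg X a (P.t (i + 1))) inferInstance ≤
      MeasurableSpace.comap (seg Y a (P.t i)) inferInstance) :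
    dInfoP μ X Y P = 0 :=
  Finset.sum_eq_zero fun i hi =>
    condMI_eq_zero_of_comap_le μ _ _ _ (hcausal i (Finset.mem_range.mp hi))

/-- If the channel input is a delayed version of the output —
`X_t = Y_{t-ε}` for `t ≥ ε` and `X_t = 0` on `[0,ε)`, or more generally if for every
`t` the past `X_0^t` is measurable with respect to `σ(Y_0^{max(t-ε,0)})` — then
`I_t(X_0^T → Y_0^T) = 0` for every partition `t` of mesh at most `ε`, and consequently
`I(X_0^T → Y_0^T) = 0`. -/
theorem dInfo_zero_of_delayed_feedback {F : Type*} [MeasurableSpace F]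
    (μ : Measure Ω) [IsProbabilityMeasure μ] (T ε : ℝ) (hT : 0 < T) (hε : 0 < ε)
    (X Y : ℝ → Ω → F)
    (hdelay : ∀ t : ℝ, 0 ≤ t → t ≤ T →
      MeasurableSpace.comap (seg X 0 t) inferInstance ≤
        MeasurableSpace.comap (seg Y 0 (max (t - ε) 0)) inferInstance) :
    (∀ P : Partn 0 T, (∀ i < P.n, P.t (i + 1) - P.t i ≤ ε) → dInfoP μ X Y P = 0) ∧
      dInfo μ X Y 0 T = 0 := by
  have hfine : ∀ P : Partn 0 T, (∀ i < P.n, P.t (i + 1) - P.t i ≤ ε) → dInfoP μ X Y P = 0 := by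
    intro P hmesh
    refine dInfoP_eq_zero_of_comap_le μ X Y P fun i hi => ?_
    obtain ⟨hti, -⟩ := P.t_mem_Icc hi.le
    obtain ⟨hti₁, hti₁T⟩ := P.t_mem_Icc (Nat.succ_le_of_lt hi)
    have hlag : max (P.t (i + 1) - ε) 0 ≤ P.t i := max_le (by linarith [hmesh i hi]) hti
    exact (hdelay _ hti₁ hti₁T).trans (comap_seg_mono Y 0 hlag)
  refine ⟨hfine, le_antisymm ?_ zero_le⟩
  calc dInfo μ X Y 0 T ≤ dInfoP μ X Y (Partn.uniform 0 T ε hT hε) := iInf_le _ _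
    _ = 0 := hfine _ fun i _ => Partn.uniform_mesh_le 0 T ε hT hε i

end CTDI
end
end
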